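/- arXiv:2205.02590 — 4 statements merged into one kernel-verified Lean document; each statement's English description precedes it below -/
import Mathlib

section
/- Soundness of the contract for the store statement: let x, y be program variables with size(x) = N, and let X, Y, z be logical variables with size(X) = N, size(Y) = size(y), and size(z) = size(y). Then the contract {x = X * y = Y * X ↦ z * X + size(z) ≤ 𝔢(X)} *x := y {x = X * y = Y * X ↦ Y * X + size(z) ≤ 𝔢(X)} is sound. -/
namespace Broom

abbrev Byte := Fin 256
abbrev Mem := ℕ → Option Byte

/-- Read a byte sequence (little-endian) as an unsigned number. -/
def bytesToNum : List Byte → ℕ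
  | [] => 0
  | b :: rest => b.val + 256 * bytesToNum rest

/-- The byte sequence of length `n` representing the number `v` (little-endian). -/
def natToBytes : ℕ → ℕ → List Byte
  | 0, _ => []
  | n + 1, v => (⟨v % 256, Nat.mod_lt _ (by norm_num)⟩ : Byte) :: natToBytes n (v / 256)

/-- The base address of the block of `B` containing `ℓ` (0 if there is none). -/
noncomputable def baseFn (B : Finset (ℕ × ℕ)) (ℓ : ℕ) : ℕ :=
  if h : ∃ p ∈ B, p.1 ≤ ℓ ∧ ℓ < p.2 then h.choose.1 else 0

/-- The end address of the block of `B` containing `ℓ` (0 if there is none). -/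
noncomputable def endFn (B : Finset (ℕ × ℕ)) (ℓ : ℕ) : ℕ :=
  if h : ∃ p ∈ B, p.1 ≤ ℓ ∧ ℓ < p.2 then h.choose.2 else 0

/-- Well-formed configuration (stack, blocks, memory). -/
def WfConfig {Var : Type} (N : ℕ) (sz : Var → ℕ) (s : Var → List Byte)
    (B : Finset (ℕ × ℕ)) (M : Mem) : Prop :=
  (∀ v, (s v).length = sz v) ∧
  (∀ p ∈ B, 0 < p.1 ∧ p.1 < p.2 ∧ p.2 ≤ 2 ^ (8 * N)) ∧
  (∀ p ∈ B, ∀ q ∈ B, p.1 ≠ q.1 ∨ p.2 ≠ q.2 → p.2 ≤ q.1 ∨ q.2 ≤ p.1) ∧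
  (∀ ℓ : ℕ, (M ℓ).isSome → ∃ p ∈ B, p.1 ≤ ℓ ∧ ℓ < p.2)

/-- Expressions of the separation logic. -/
inductive Expr (Var : Type) where
  | const : ℕ → ℕ → Expr Var          -- size (in bytes), value
  | var : Var → Expr Var
  | base : Expr Var → Expr Var        -- 𝔟(·)
  | ende : Expr Var → Expr Var        -- 𝔢(·)
  | add : Expr Var → Expr Var → Expr Var
  | sub : Expr Var → Expr Var → Expr Var
  | substr : Expr Var → ℕ → ℕ → Expr Var   -- ζ[i..j]

namespace Expr

variable {Var : Type}

def size (sz : Var → ℕ) (N : ℕ) : Expr Var → ℕ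
  | const n _ => n
  | var v => sz v
  | base _ => N
  | ende _ => N
  | add e₁ _ => e₁.size sz N
  | sub e₁ _ => e₁.size sz N
  | substr _ i j => j - i

noncomputable def eval (B : Finset (ℕ × ℕ)) (s : Var → List Byte) : Expr Var → ℕ
  | const _ v => v
  | var x => bytesToNum (s x)
  | base e => baseFn B (e.eval B s)
  | ende e => endFn B (e.eval B s)
  | add e₁ e₂ => e₁.eval B s + e₂.eval B s
  | sub e₁ e₂ => e₁.eval B s - e₂.eval B s
  | substr e i j => (e.eval B s / 256 ^ i) % 256 ^ (j - i)

def fv : Expr Var → Set Var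
  | const _ _ => ∅
  | var v => {v}
  | base e => e.fv
  | ende e => e.fv
  | add e₁ e₂ => e₁.fv ∪ e₂.fv
  | sub e₁ e₂ => e₁.fv ∪ e₂.fv
  | substr e _ _ => e.fv

/-- The expression does not use the operators 𝔟(·) and 𝔢(·). -/
def noBE : Expr Var → Prop
  | const _ _ => True
  | var _ => True
  | base _ => False
  | ende _ => False
  | add e₁ e₂ => e₁.noBE ∧ e₂.noBE
  | sub e₁ e₂ => e₁.noBE ∧ e₂.noBE
  | substr e _ _ => e.noBE

def subst (σ : Var → Expr Var) : Expr Var → Expr Var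
  | const n v => const n v
  | var v => σ v
  | base e => base (e.subst σ)
  | ende e => ende (e.subst σ)
  | add e₁ e₂ => add (e₁.subst σ) (e₂.subst σ)
  | sub e₁ e₂ => sub (e₁.subst σ) (e₂.subst σ)
  | substr e i j => substr (e.subst σ) i j

end Expr

inductive CmpOp where
  | eq | ne | le | lt | ge | gt

def CmpOp.sem : CmpOp → ℕ → ℕ → Prop
  | eq, a, b => a = b
  | ne, a, b => a ≠ b
  | le, a, b => a ≤ b
  | lt, a, b => a < b
  | ge, a, b => b ≤ a
  | gt, a, b => b < a

def CmpOp.compl : CmpOp → CmpOp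
  | eq => ne
  | ne => eq
  | le => gt
  | lt => ge
  | ge => lt
  | gt => le

/-- Formulae of the separation logic. `ptsBlk ε none κ` is `ε ↦ ⊤[κ]`,
`ptsBlk ε (some b) κ` is `ε ↦ b[κ]`. -/
inductive SLF (Var : Type) where
  | emp : SLF Var
  | tt : SLF Var
  | pts : Expr Var → Expr Var → SLF Var
  | ptsBlk : Expr Var → Option Byte → Expr Var → SLF Var
  | cmp : CmpOp → Expr Var → Expr Var → SLF Var
  | star : SLF Var → SLF Var → SLF Var
  | disj : SLF Var → SLF Var → SLF Var
  | exis : Var → SLF Var → SLF Var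

/-- `M` is the disjoint union of `M₁` and `M₂`. -/
def msplit (M M₁ M₂ : Mem) : Prop :=
  (∀ ℓ, ¬((M₁ ℓ).isSome ∧ (M₂ ℓ).isSome)) ∧
  (∀ ℓ, M ℓ = if (M₁ ℓ).isSome then M₁ ℓ else M₂ ℓ)

/-- The byte sequence `M[a, a+n)`. -/
def readBytes (M : Mem) (a n : ℕ) : List Byte :=
  (List.range n).map fun i => (M (a + i)).getD 0

/-- Satisfaction of a separation-logic formula by a configuration. -/
def sat {Var : Type} [DecidableEq Var] (N : ℕ) (sz : Var → ℕ) :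
    (Var → List Byte) → Finset (ℕ × ℕ) → Mem → SLF Var → Prop
  | _, _, M, .emp => ∀ ℓ, M ℓ = none
  | _, _, _, .tt => True
  | s, B, M, .pts e₁ e₂ =>
      (∀ ℓ, (M ℓ).isSome ↔ (e₁.eval B s ≤ ℓ ∧ ℓ < e₁.eval B s + e₂.size sz N)) ∧
      bytesToNum (readBytes M (e₁.eval B s) (e₂.size sz N)) = e₂.eval B s % 256 ^ e₂.size sz N
  | s, B, M, .ptsBlk e₁ m e₂ =>
      (∀ ℓ, (M ℓ).isSome ↔ (e₁.eval B s ≤ ℓ ∧ ℓ < e₁.eval B s + e₂.eval B s)) ∧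
      (∀ b, m = some b → ∀ ℓ, e₁.eval B s ≤ ℓ → ℓ < e₁.eval B s + e₂.eval B s → M ℓ = some b)
  | s, B, M, .cmp op e₁ e₂ => (∀ ℓ, M ℓ = none) ∧ op.sem (e₁.eval B s) (e₂.eval B s)
  | s, B, M, .star φ₁ φ₂ => ∃ M₁ M₂, msplit M M₁ M₂ ∧ sat N sz s B M₁ φ₁ ∧ sat N sz s B M₂ φ₂
  | s, B, M, .disj φ₁ φ₂ => sat N sz s B M φ₁ ∨ sat N sz s B M φ₂
  | s, B, M, .exis x φ => ∃ v : List Byte, v.length = sz x ∧ sat N sz (Function.update s x v) B M φ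

namespace SLF

variable {Var : Type}

/-- Free variables of a formula. -/
def fv : SLF Var → Set Var
  | emp => ∅
  | tt => ∅
  | pts e₁ e₂ => e₁.fv ∪ e₂.fv
  | ptsBlk e₁ _ e₂ => e₁.fv ∪ e₂.fv
  | cmp _ e₁ e₂ => e₁.fv ∪ e₂.fv
  | star φ₁ φ₂ => φ₁.fv ∪ φ₂.fv
  | disj φ₁ φ₂ => φ₁.fv ∪ φ₂.fv
  | exis x φ => φ.fv \ {x}

/-- Symbolic heaps are the disjunction-free formulae. -/
def noDisj : SLF Var → Prop
  | emp => True
  | tt => True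
  | pts _ _ => True
  | ptsBlk _ _ _ => True
  | cmp _ _ _ => True
  | star φ₁ φ₂ => φ₁.noDisj ∧ φ₂.noDisj
  | disj _ _ => False
  | exis _ φ => φ.noDisj

/-- Quantifier-free formulae. -/
def qf : SLF Var → Prop
  | emp => True
  | tt => True
  | pts _ _ => True
  | ptsBlk _ _ _ => True
  | cmp _ _ _ => True
  | star φ₁ φ₂ => φ₁.qf ∧ φ₂.qf
  | disj φ₁ φ₂ => φ₁.qf ∧ φ₂.qf
  | exis _ _ => False

/-- The formula does not use the operators 𝔟(·) and 𝔢(·) in its expressions. -/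
def noBE : SLF Var → Prop
  | emp => True
  | tt => True
  | pts e₁ e₂ => e₁.noBE ∧ e₂.noBE
  | ptsBlk e₁ _ e₂ => e₁.noBE ∧ e₂.noBE
  | cmp _ e₁ e₂ => e₁.noBE ∧ e₂.noBE
  | star φ₁ φ₂ => φ₁.noBE ∧ φ₂.noBE
  | disj φ₁ φ₂ => φ₁.noBE ∧ φ₂.noBE
  | exis _ φ => φ.noBE

/-- Pure formulae: separating conjunctions of pure atoms. -/
def isPure : SLF Var → Prop
  | cmp _ _ _ => True
  | star φ₁ φ₂ => φ₁.isPure ∧ φ₂.isPure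
  | _ => False

def subst [DecidableEq Var] (σ : Var → Expr Var) : SLF Var → SLF Var
  | emp => emp
  | tt => tt
  | pts e₁ e₂ => pts (e₁.subst σ) (e₂.subst σ)
  | ptsBlk e₁ m e₂ => ptsBlk (e₁.subst σ) m (e₂.subst σ)
  | cmp op e₁ e₂ => cmp op (e₁.subst σ) (e₂.subst σ)
  | star φ₁ φ₂ => star (φ₁.subst σ) (φ₂.subst σ)
  | disj φ₁ φ₂ => disj (φ₁.subst σ) (φ₂.subst σ)
  | exis x φ => exis x (φ.subst fun v => if v = x then .var v else σ v)

end SLF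

/-- Semantic entailment `φ ⊨ ψ`. -/
def Entails {Var : Type} [DecidableEq Var] (N : ℕ) (sz : Var → ℕ) (φ ψ : SLF Var) : Prop :=
  ∀ s B M, WfConfig N sz s B M → sat N sz s B M φ → sat N sz s B M ψ

/-- Existential quantification over a list of variables. -/
def exisList {Var : Type} : List Var → SLF Var → SLF Var
  | [], φ => φ
  | x :: xs, φ => .exis x (exisList xs φ)

/-- Semantic separating conjunction of memory predicates. -/
def mstar (P Q : Mem → Prop) : Mem → Prop :=
  fun M => ∃ M₁ M₂, msplit M M₁ M₂ ∧ P M₁ ∧ Q M₂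

/-- The singly-linked list-segment predicate `sll_Λ(ε₁, ε₂)`,
parameterized by the segment formula `Λ`. -/
inductive Sll {Var : Type} [DecidableEq Var] (N : ℕ) (sz : Var → ℕ)
    (Lam : Expr Var → Expr Var → SLF Var) (s : Var → List Byte) (B : Finset (ℕ × ℕ)) :
    Mem → Expr Var → Expr Var → Prop where
  | nil {M : Mem} {e₁ e₂ : Expr Var} :
      e₁.eval B s = e₂.eval B s → (∀ ℓ, M ℓ = none) → Sll N sz Lam s B M e₁ e₂
  | cons {M M₁ M₂ : Mem} {e₁ e₂ : Expr Var} (ℓ : ℕ) :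
      ℓ < 2 ^ (8 * N) → e₁.eval B s ≠ e₂.eval B s → msplit M M₁ M₂ →
      sat N sz s B M₁ (Lam e₁ (.const N ℓ)) →
      Sll N sz Lam s B M₂ (.const N ℓ) e₂ → Sll N sz Lam s B M e₁ e₂

/-- The segment formula `Λ` is block-closed. -/
def BlockClosed {Var : Type} [DecidableEq Var] (N : ℕ) (sz : Var → ℕ)
    (Lam : Expr Var → Expr Var → SLF Var) : Prop :=
  ∀ (e₁ e₂ : Expr Var) (s : Var → List Byte) (B : Finset (ℕ × ℕ)) (M : Mem),
    WfConfig N sz s B M → sat N sz s B M (Lam e₁ e₂) →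
    ∀ ℓ, (M ℓ).isSome → ∀ ℓ', baseFn B ℓ ≤ ℓ' → ℓ' < endFn B ℓ → (M ℓ').isSome


lemma bytesToNum_lt_pow (l : List Byte) : bytesToNum l < 256 ^ l.length := by
  induction l with
  | nil => simp [bytesToNum]
  | cons b t ih =>
    have hb := b.isLt
    simp only [bytesToNum, List.length_cons, pow_succ]
    set k := 256 ^ t.length
    omega

lemma map_getD_range (l : List Byte) :
    (List.range l.length).map (fun i => l.getD i 0) = l := by
  apply List.ext_getElem
  · simp
  · intro i h1 h2
    simp [List.getD_eq_getElem?_getD, List.getElem?_eq_getElem h2]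

lemma msplit_isSome {M M₁ M₂ : Mem} (h : msplit M M₁ M₂) (ℓ : ℕ) :
    (M ℓ).isSome ↔ (M₁ ℓ).isSome ∨ (M₂ ℓ).isSome := by
  rw [h.2 ℓ]
  by_cases hs : (M₁ ℓ).isSome <;> simp [hs]

/-- Soundness of the contract for the store statement `*x := y`:
`{x = X * y = Y * X ↦ z * X + size(z) ≤ 𝔢(X)} *x := y {x = X * y = Y * X ↦ Y * X + size(z) ≤ 𝔢(X)}`. -/
theorem store_contract_sound {Var : Type} [DecidableEq Var]
    (N : ℕ) (hN : 1 ≤ N) (sz : Var → ℕ) (hszpos : ∀ v, 1 ≤ sz v)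
    (LVar : Set Var)
    -- program variables x, y; logical variables X, Y, z
    (x y X Y z : Var)
    (hx : x ∉ LVar) (hy : y ∉ LVar) (hX : X ∈ LVar) (hY : Y ∈ LVar) (hz : z ∈ LVar)
    (hxy : x ≠ y) (hXY : X ≠ Y) (hXz : X ≠ z) (hYz : Y ≠ z)
    (hszx : sz x = N) (hszX : sz X = N) (hszY : sz Y = sz y) (hszz : sz z = sz y)
    -- the frame: a symbolic heap over logical variables only
    (F : SLF Var) (hFsh : F.noDisj) (hFlv : F.fv ⊆ LVar)
    (s : Var → List Byte) (B : Finset (ℕ × ℕ)) (M : Mem)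
    (hwf : WfConfig N sz s B M)
    -- (s,B,M) ⊨ F * (x = X * y = Y * X ↦ z * X + size(z) ≤ 𝔢(X))
    (hpre : sat N sz s B M (F.star
      ((((SLF.cmp .eq (.var x) (.var X)).star
          (SLF.cmp .eq (.var y) (.var Y))).star
        (SLF.pts (.var X) (.var z))).star
        (SLF.cmp .le (.add (.var X) (.const N (sz z))) (.ende (.var X)))))) :
    -- the execution does not err ...
    ¬ (baseFn B (bytesToNum (s x)) = 0 ∨
        bytesToNum (s x) + sz y > endFn B (bytesToNum (s x))) ∧
    -- ... and the resulting configuration (with M[[s(x), s(x)+size(y)) ↦ s(y)])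
    -- satisfies F * (x = X * y = Y * X ↦ Y * X + size(z) ≤ 𝔢(X))
    sat N sz s B
      (fun ℓ => if bytesToNum (s x) ≤ ℓ ∧ ℓ < bytesToNum (s x) + sz y then
          some ((s y).getD (ℓ - bytesToNum (s x)) 0) else M ℓ)
      (F.star
        ((((SLF.cmp .eq (.var x) (.var X)).star
            (SLF.cmp .eq (.var y) (.var Y))).star
          (SLF.pts (.var X) (.var Y))).star
          (SLF.cmp .le (.add (.var X) (.const N (sz z))) (.ende (.var X))))) := by
  obtain ⟨MF, Mr, hsp, hF, hr⟩ := hpre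
  obtain ⟨Ma, Mc, hsp2, ha, hc⟩ := hr
  obtain ⟨Me, Mp, hsp3, he, hp⟩ := ha
  obtain ⟨Me1, Me2, hsp4, he1, he2⟩ := he
  simp only [sat, Expr.eval, CmpOp.sem, Expr.size] at he1 he2 hp hc
  set a : ℕ := bytesToNum (s X) with ha_def
  have hxa : bytesToNum (s x) = a := he1.2
  have hya : bytesToNum (s y) = bytesToNum (s Y) := he2.2
  have hMe : ∀ ℓ, Me ℓ = none := by
    intro ℓ
    have := hsp4.2 ℓ
    rw [he1.1 ℓ] at this
    simp only [Option.isSome_none, Bool.false_eq_true, if_false] at this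
    rw [this, he2.1 ℓ]
  have hMaMp : ∀ ℓ, Ma ℓ = Mp ℓ := by
    intro ℓ
    rw [hsp3.2 ℓ, hMe ℓ]
    simp
  have hMrMp : ∀ ℓ, Mr ℓ = Mp ℓ := by
    intro ℓ
    rw [hsp2.2 ℓ, hMaMp ℓ, hc.1 ℓ]
    by_cases hs : (Mp ℓ).isSome
    · simp [hs]
    · simp [hs, Option.not_isSome_iff_eq_none.mp hs]
  have hM : ∀ ℓ, M ℓ = if (MF ℓ).isSome then MF ℓ else Mp ℓ := by
    intro ℓ; rw [hsp.2 ℓ, hMrMp ℓ]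
  have hdis : ∀ ℓ, ¬((MF ℓ).isSome ∧ (Mp ℓ).isSome) := by
    intro ℓ hcon
    apply hsp.1 ℓ
    refine ⟨hcon.1, ?_⟩
    rw [hMrMp ℓ]
    exact hcon.2
  have hdom := hp.1
  have hszz1 : 1 ≤ sz z := hszpos z
  have hMpa : (Mp a).isSome := (hdom a).mpr ⟨le_refl _, by omega⟩
  have hMa : (M a).isSome := by
    rw [hM a]
    by_cases hs : (MF a).isSome <;> simp [hs, hMpa]
  have hex : ∃ p ∈ B, p.1 ≤ a ∧ a < p.2 := hwf.2.2.2 a hMa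
  have hbase : 0 < baseFn B a := by
    rw [baseFn, dif_pos hex]
    obtain ⟨hmem, -, -⟩ := hex.choose_spec
    exact (hwf.2.1 _ hmem).1
  have hend : a + sz z ≤ endFn B a := hc.2
  constructor
  · rw [hxa]
    push_neg
    exact ⟨by omega, by omega⟩
  · -- postcondition
    rw [hxa]
    set Mr' : Mem := fun ℓ => if a ≤ ℓ ∧ ℓ < a + sz y then
        some ((s y).getD (ℓ - a) 0) else none with hMr'_def
    have hMr'some : ∀ ℓ, (Mr' ℓ).isSome ↔ (a ≤ ℓ ∧ ℓ < a + sz y) := by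
      intro ℓ
      by_cases hℓ : a ≤ ℓ ∧ ℓ < a + sz y <;> simp [hMr'_def, hℓ]
    have hdomMp : ∀ ℓ, (Mp ℓ).isSome ↔ (a ≤ ℓ ∧ ℓ < a + sz y) := by
      intro ℓ; rw [hdom ℓ, hszz]
    refine ⟨MF, Mr', ⟨?_, ?_⟩, hF, ?_⟩
    · intro ℓ hcon
      exact hdis ℓ ⟨hcon.1, (hdomMp ℓ).mpr ((hMr'some ℓ).mp hcon.2)⟩
    · intro ℓ
      by_cases hℓ : a ≤ ℓ ∧ ℓ < a + sz y
      · have hMFn : ¬ (MF ℓ).isSome := fun hs => hdis ℓ ⟨hs, (hdomMp ℓ).mpr hℓ⟩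
        simp [hℓ, hMFn, hMr'_def]
      · have hMpn : Mp ℓ = none :=
          Option.not_isSome_iff_eq_none.mp (fun hs => hℓ ((hdomMp ℓ).mp hs))
        simp only [hℓ, if_false]
        rw [hM ℓ, hMpn]
        simp [hMr'_def, hℓ]
    · -- sat of the postcondition body by Mr'
      refine ⟨Mr', fun _ => none, ⟨by simp, fun ℓ => by
          by_cases hs : (Mr' ℓ).isSome <;>
            simp [hs, Option.not_isSome_iff_eq_none.mp]⟩, ?_, ?_⟩
      · refine ⟨fun _ => none, Mr', ⟨by simp, fun ℓ => by simp⟩, ?_, ?_⟩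
        · exact ⟨Me1, Me2, ⟨by simp [he1.1], fun ℓ => by simp [hMe ℓ, he1.1 ℓ, he2.1 ℓ, hsp4.2 ℓ]⟩, he1, he2⟩
        · -- pts (var X) (var Y)
          refine ⟨?_, ?_⟩
          · intro ℓ
            simp only [Expr.eval, Expr.size, hszY]
            exact hMr'some ℓ
          · simp only [Expr.eval, Expr.size, hszY]
            have hread : readBytes Mr' a (sz y) = s y := by
              have hlen : (s y).length = sz y := hwf.1 y
              apply List.ext_getElem
              · simp [readBytes, hlen]
              · intro i h1 h2
                simp only [readBytes, List.length_map, List.length_range] at h1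
                simp only [readBytes, List.getElem_map, List.getElem_range]
                have hcond : a ≤ a + i ∧ a + i < a + sz y := ⟨by omega, by omega⟩
                simp [hMr'_def, hcond, Nat.add_sub_cancel_left,
                  List.getD_eq_getElem?_getD, List.getElem?_eq_getElem h2]
            rw [hread, hya]
            have hlt : bytesToNum (s Y) < 256 ^ sz y := by
              have := bytesToNum_lt_pow (s Y)
              rwa [hwf.1 Y, hszY] at this
            exact (Nat.mod_eq_of_lt hlt).symm
      · -- cmp le by empty memory
        exact ⟨fun _ => rfl, hend⟩

end Broom
end

section
/- Soundness of the contract for memory allocation: let x, z be program variables with size(x) = N, let Y be a logical variable with size(Y) = size(z), and let u be a variable with size(u) = N. Then the contract {y = Y * Y ≠ 0} x := malloc(y) {(x = null * y = Y) ∨ ∃u. x = u * u ↦ ⊤[Y] * 𝔟(u) = u * 𝔢(u) = u + Y * y = Y}, restricted to frames F whose expressions do not use the operators 𝔟(·) and 𝔢(·), is sound. -/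
namespace Broom

section Aux

lemma bytesToNum_natToBytes (n v : ℕ) : bytesToNum (natToBytes n v) = v % 256 ^ n := by
  induction n generalizing v with
  | zero => simp [natToBytes, bytesToNum, Nat.mod_one]
  | succ n ih =>
    simp only [natToBytes, bytesToNum, ih]
    rw [pow_succ', Nat.mod_mul]

lemma natToBytes_length (n v : ℕ) : (natToBytes n v).length = n := by
  induction n generalizing v with
  | zero => rfl
  | succ n ih => simp [natToBytes, ih]

lemma eval_congr {Var : Type} {e : Expr Var} (he : e.noBE)
    {s s' : Var → List Byte} {B B' : Finset (ℕ × ℕ)}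
    (hs : ∀ v ∈ e.fv, s v = s' v) :
    e.eval B s = e.eval B' s' := by
  induction e with
  | const n v => rfl
  | var v => simp [Expr.eval, hs v (by simp [Expr.fv])]
  | base e ih => exact he.elim
  | ende e ih => exact he.elim
  | add e₁ e₂ ih₁ ih₂ =>
    simp only [Expr.eval]
    rw [ih₁ he.1 fun v hv => hs v (Or.inl hv), ih₂ he.2 fun v hv => hs v (Or.inr hv)]
  | sub e₁ e₂ ih₁ ih₂ =>
    simp only [Expr.eval]
    rw [ih₁ he.1 fun v hv => hs v (Or.inl hv), ih₂ he.2 fun v hv => hs v (Or.inr hv)]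
  | substr e i j ih =>
    simp only [Expr.eval]
    rw [ih he hs]

lemma sat_congr {Var : Type} [DecidableEq Var] (N : ℕ) (sz : Var → ℕ)
    {F : SLF Var} (hbe : F.noBE)
    {s s' : Var → List Byte} {B B' : Finset (ℕ × ℕ)} {M : Mem}
    (hs : ∀ v ∈ F.fv, s v = s' v) :
    sat N sz s B M F → sat N sz s' B' M F := by
  induction F generalizing s s' M with
  | emp => exact id
  | tt => exact id
  | pts e₁ e₂ =>
    intro ⟨h1, h2⟩
    simp only [sat]
    rw [show e₁.eval B' s' = e₁.eval B s from
          (eval_congr hbe.1 fun v hv => hs v (Or.inl hv)).symm,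
        show e₂.eval B' s' = e₂.eval B s from
          (eval_congr hbe.2 fun v hv => hs v (Or.inr hv)).symm]
    exact ⟨h1, h2⟩
  | ptsBlk e₁ m e₂ =>
    intro ⟨h1, h2⟩
    simp only [sat]
    rw [show e₁.eval B' s' = e₁.eval B s from
          (eval_congr hbe.1 fun v hv => hs v (Or.inl hv)).symm,
        show e₂.eval B' s' = e₂.eval B s from
          (eval_congr hbe.2 fun v hv => hs v (Or.inr hv)).symm]
    exact ⟨h1, h2⟩
  | cmp op e₁ e₂ =>
    intro ⟨h1, h2⟩
    simp only [sat]
    rw [show e₁.eval B' s' = e₁.eval B s from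
          (eval_congr hbe.1 fun v hv => hs v (Or.inl hv)).symm,
        show e₂.eval B' s' = e₂.eval B s from
          (eval_congr hbe.2 fun v hv => hs v (Or.inr hv)).symm]
    exact ⟨h1, h2⟩
  | star φ₁ φ₂ ih₁ ih₂ =>
    intro ⟨M₁, M₂, hsp, h1, h2⟩
    exact ⟨M₁, M₂, hsp, ih₁ hbe.1 (fun v hv => hs v (Or.inl hv)) h1,
      ih₂ hbe.2 (fun v hv => hs v (Or.inr hv)) h2⟩
  | disj φ₁ φ₂ ih₁ ih₂ =>
    intro h
    cases h with
    | inl h => exact Or.inl (ih₁ hbe.1 (fun v hv => hs v (Or.inl hv)) h)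
    | inr h => exact Or.inr (ih₂ hbe.2 (fun v hv => hs v (Or.inr hv)) h)
  | exis x φ ih =>
    intro ⟨v, hv, h⟩
    refine ⟨v, hv, ih hbe ?_ h⟩
    intro w hw
    by_cases hwx : w = x
    · subst hwx; simp [Function.update]
    · rw [Function.update_of_ne hwx, Function.update_of_ne hwx]
      exact hs w ⟨hw, hwx⟩

lemma msplit_empty_right (M : Mem) : msplit M M (fun _ => none) := by
  constructor
  · intro ℓ h; simp at h
  · intro ℓ; cases h : M ℓ <;> simp [h]

lemma msplit_empty_left (M : Mem) : msplit M (fun _ => none) M := by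
  constructor
  · intro ℓ h; simp at h
  · intro ℓ; simp

end Aux

/-- Soundness of the contract for memory allocation `x := malloc(y)`:
`{y = Y * Y ≠ 0} x := malloc(y) {(x = null * y = Y) ∨ ∃u. x = u * u ↦ ⊤[Y] * 𝔟(u) = u *
𝔢(u) = u + Y * y = Y}`, restricted to frames whose expressions do not use 𝔟(·) and 𝔢(·). -/
theorem malloc_contract_sound {Var : Type} [DecidableEq Var]
    (N : ℕ) (hN : 1 ≤ N) (sz : Var → ℕ) (hszpos : ∀ v, 1 ≤ sz v)
    (LVar : Set Var)
    -- program variables x, y; logical variable Y; u a fresh variable of size N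
    (x y Y u : Var)
    (hx : x ∉ LVar) (hy : y ∉ LVar) (hY : Y ∈ LVar)
    (hxy : x ≠ y) (hux : u ≠ x) (huy : u ≠ y) (huY : u ≠ Y)
    (hszx : sz x = N) (hszY : sz Y = sz y) (hszu : sz u = N)
    -- the frame: a symbolic heap over logical variables only, not using 𝔟(·)/𝔢(·)
    (F : SLF Var) (hFsh : F.noDisj) (hFlv : F.fv ⊆ LVar) (hFbe : F.noBE)
    -- the post-condition Q of the contract
    (Q : SLF Var)
    (hQ : Q = SLF.disj
      ((SLF.cmp .eq (.var x) (.const N 0)).star (SLF.cmp .eq (.var y) (.var Y)))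
      (SLF.exis u (((((SLF.cmp .eq (.var x) (.var u)).star
          (SLF.ptsBlk (.var u) none (.var Y))).star
        (SLF.cmp .eq (.base (.var u)) (.var u))).star
        (SLF.cmp .eq (.ende (.var u)) (.add (.var u) (.var Y)))).star
        (SLF.cmp .eq (.var y) (.var Y)))))
    (s : Var → List Byte) (B : Finset (ℕ × ℕ)) (M : Mem)
    (hwf : WfConfig N sz s B M)
    -- (s,B,M) ⊨ F * (y = Y * Y ≠ 0)
    (hpre : sat N sz s B M (F.star
      ((SLF.cmp .eq (.var y) (.var Y)).star
        (SLF.cmp .ne (.var Y) (.const N 0))))) :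
    -- the execution does not err (the requested size is nonzero) ...
    bytesToNum (s y) ≠ 0 ∧
    -- ... the failing allocation yields a configuration satisfying F * Q ...
    sat N sz (Function.update s x (natToBytes N 0)) B M (F.star Q) ∧
    -- ... and every successful allocation yields a configuration satisfying F * Q
    (∀ (ℓ : ℕ) (k : List Byte),
      0 < ℓ → ℓ + bytesToNum (s y) ≤ 2 ^ (8 * N) →
      k.length = bytesToNum (s y) →
      (∀ p ∈ B, p.2 ≤ ℓ ∨ ℓ + bytesToNum (s y) ≤ p.1) →
      sat N sz (Function.update s x (natToBytes N ℓ))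
        (insert (ℓ, ℓ + bytesToNum (s y)) B)
        (fun a => if ℓ ≤ a ∧ a < ℓ + bytesToNum (s y) then
            some (k.getD (a - ℓ) 0) else M a)
        (F.star Q)) := by
  subst hQ
  obtain ⟨M₁, M₂, hsp, hF, hpure⟩ := hpre
  obtain ⟨Ma, Mb, hsp2, hcy, hcY⟩ := hpure
  have heq : bytesToNum (s y) = bytesToNum (s Y) := hcy.2
  have hne : bytesToNum (s Y) ≠ 0 := hcY.2
  have hn0 : bytesToNum (s y) ≠ 0 := by rw [heq]; exact hne
  have hM2 : ∀ ℓ, M₂ ℓ = none := by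
    intro ℓ
    rw [hsp2.2 ℓ]
    simp [hcy.1 ℓ, hcY.1 ℓ]
  have hMM1 : M = M₁ := by
    funext ℓ
    rw [hsp.2 ℓ]
    cases h : M₁ ℓ <;> simp [h, hM2 ℓ]
  rw [← hMM1] at hF
  have hYnex : Y ≠ x := fun h => hx (h ▸ hY)
  have h256 : (256 : ℕ) ^ N = 2 ^ (8 * N) := by rw [pow_mul]; norm_num
  refine ⟨hn0, ?_, ?_⟩
  · -- failing allocation
    refine ⟨M, fun _ => none, msplit_empty_right M, ?_, ?_⟩
    · refine sat_congr N sz hFbe ?_ hF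
      intro v hv
      have hvx : v ≠ x := by rintro rfl; exact hx (hFlv hv)
      rw [Function.update_of_ne hvx]
    · left
      refine ⟨fun _ => none, fun _ => none, msplit_empty_right _,
        ⟨fun _ => rfl, ?_⟩, fun _ => rfl, ?_⟩
      · show bytesToNum (Function.update s x (natToBytes N 0) x) = 0
        simp [bytesToNum_natToBytes]
      · show bytesToNum (Function.update s x (natToBytes N 0) y)
            = bytesToNum (Function.update s x (natToBytes N 0) Y)
        rw [Function.update_of_ne (Ne.symm hxy), Function.update_of_ne hYnex]
        exact heq
  · -- successful allocation
    intro ℓ k hℓpos hub hklen hdisj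
    have hℓlt : ℓ < 2 ^ (8 * N) := by
      have := Nat.pos_of_ne_zero hn0
      omega
    have hevalℓ : bytesToNum (natToBytes N ℓ) = ℓ := by
      rw [bytesToNum_natToBytes, h256]
      exact Nat.mod_eq_of_lt hℓlt
    set s' := Function.update s x (natToBytes N ℓ) with hs'def
    set B' := insert (ℓ, ℓ + bytesToNum (s y)) B with hB'def
    have hMnone : ∀ a, ℓ ≤ a → a < ℓ + bytesToNum (s y) → M a = none := by
      intro a h1 h2
      by_contra h
      obtain ⟨p, hp, hp1, hp2⟩ := hwf.2.2.2 a (Option.isSome_iff_ne_none.mpr h)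
      rcases hdisj p hp with h' | h' <;> omega
    refine ⟨M, fun a => if ℓ ≤ a ∧ a < ℓ + bytesToNum (s y)
        then some (k.getD (a - ℓ) 0) else none, ⟨?_, ?_⟩, ?_, ?_⟩
    · intro a ⟨h1, h2⟩
      dsimp only at h2
      by_cases hc : ℓ ≤ a ∧ a < ℓ + bytesToNum (s y)
      · rw [hMnone a hc.1 hc.2] at h1; simp at h1
      · rw [if_neg hc] at h2; simp at h2
    · intro a
      dsimp only
      by_cases hc : ℓ ≤ a ∧ a < ℓ + bytesToNum (s y)
      · rw [if_pos hc, if_pos hc, hMnone a hc.1 hc.2]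
        simp
      · rw [if_neg hc, if_neg hc]
        cases h : M a <;> simp [h]
    · refine sat_congr N sz hFbe ?_ hF
      intro v hv
      have hvx : v ≠ x := by rintro rfl; exact hx (hFlv hv)
      rw [hs'def, Function.update_of_ne hvx]
    · right
      refine ⟨natToBytes N ℓ, by rw [natToBytes_length, hszu], ?_⟩
      set s'' := Function.update s' u (natToBytes N ℓ) with hs''def
      have hsu : s'' u = natToBytes N ℓ := Function.update_self _ _ _
      have hsx : s'' x = natToBytes N ℓ := by
        rw [hs''def, Function.update_of_ne (Ne.symm hux), hs'def,
          Function.update_self]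
      have hsy : s'' y = s y := by
        rw [hs''def, Function.update_of_ne (Ne.symm huy), hs'def,
          Function.update_of_ne (Ne.symm hxy)]
      have hsY : s'' Y = s Y := by
        rw [hs''def, Function.update_of_ne (Ne.symm huY), hs'def,
          Function.update_of_ne hYnex]
      have huniq : ∀ p ∈ B', p.1 ≤ ℓ → ℓ < p.2 →
          p = (ℓ, ℓ + bytesToNum (s y)) := by
        intro p hp h1 h2
        rcases Finset.mem_insert.mp hp with h | h
        · exact h
        · rcases hdisj p h with h' | h' <;> omega
      have hex : ∃ p ∈ B', p.1 ≤ ℓ ∧ ℓ < p.2 :=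
        ⟨(ℓ, ℓ + bytesToNum (s y)), Finset.mem_insert_self _ _, le_refl _,
          by have := Nat.pos_of_ne_zero hn0; omega⟩
      have hbase : baseFn B' ℓ = ℓ := by
        unfold baseFn
        rw [dif_pos hex]
        have hcs := hex.choose_spec
        rw [huniq _ hcs.1 hcs.2.1 hcs.2.2]
      have hend : endFn B' ℓ = ℓ + bytesToNum (s y) := by
        unfold endFn
        rw [dif_pos hex]
        have hcs := hex.choose_spec
        rw [huniq _ hcs.1 hcs.2.1 hcs.2.2]
      refine ⟨_, _, msplit_empty_right _,
        ⟨_, _, msplit_empty_right _,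
          ⟨_, _, msplit_empty_right _,
            ⟨_, _, msplit_empty_left _, ⟨fun _ => rfl, ?_⟩, ?_⟩,
            fun _ => rfl, ?_⟩,
          fun _ => rfl, ?_⟩,
        fun _ => rfl, ?_⟩
      · -- x = u
        show bytesToNum (s'' x) = bytesToNum (s'' u)
        rw [hsx, hsu]
      · -- u ↦ ⊤[Y]
        constructor
        · intro a
          show (if ℓ ≤ a ∧ a < ℓ + bytesToNum (s y) then _ else none).isSome
            ↔ bytesToNum (s'' u) ≤ a ∧ a < bytesToNum (s'' u) + bytesToNum (s'' Y)
          rw [hsu, hsY, hevalℓ, ← heq]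
          by_cases hc : ℓ ≤ a ∧ a < ℓ + bytesToNum (s y) <;> simp [hc]
        · intro b hb
          simp at hb
      · -- 𝔟(u) = u
        show baseFn B' (bytesToNum (s'' u)) = bytesToNum (s'' u)
        rw [hsu, hevalℓ, hbase]
      · -- 𝔢(u) = u + Y
        show endFn B' (bytesToNum (s'' u))
          = bytesToNum (s'' u) + bytesToNum (s'' Y)
        rw [hsu, hsY, hevalℓ, hend, heq]
      · -- y = Y
        show bytesToNum (s'' y) = bytesToNum (s'' Y)
        rw [hsy, hsY]
        exact heq

end Broom
end

section
/- Soundness of the split-pt-pt-right abduction rule: let k, l, l' be naturals with 0 < k and k + l < l', let ζ, ζ' be expressions with size(ζ) = l and size(ζ') = l', and suppose φ ⊨ 𝔟(ε) = 𝔟(ε') * ε = ε' + k * true. If φ * (ζ = ζ'[k..k+l]) * M ⊨ ψ * (ε' ↦ ζ'[0..k]) * ((ε + l) ↦ ζ'[k+l..l']), then φ * (ε ↦ ζ) * (ζ = ζ'[k..k+l]) * M ⊨ ψ * (ε' ↦ ζ'). -/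
namespace Broom

section Helpers

lemma msplit_eq_left {M A B : Mem} (h : msplit M A B) {ℓ : ℕ} (hA : (A ℓ).isSome) :
    M ℓ = A ℓ := by
  rw [h.2 ℓ, if_pos hA]

lemma msplit_eq_right {M A B : Mem} (h : msplit M A B) {ℓ : ℕ} (hA : A ℓ = none) :
    M ℓ = B ℓ := by
  rw [h.2 ℓ, hA]; rfl

lemma msplit_some_left {M A B : Mem} (h : msplit M A B) {ℓ : ℕ} (hA : (A ℓ).isSome) :
    (M ℓ).isSome := by
  rw [msplit_eq_left h hA]; exact hA

lemma msplit_some_right {M A B : Mem} (h : msplit M A B) {ℓ : ℕ} (hB : (B ℓ).isSome) :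
    (M ℓ).isSome := by
  rcases hA : A ℓ with _ | b
  · rw [msplit_eq_right h hA]; exact hB
  · rw [msplit_eq_left h (by simp [hA])]; simp [hA]

lemma msplit_none {M A B : Mem} (h : msplit M A B) {ℓ : ℕ} (hM : M ℓ = none) :
    A ℓ = none ∧ B ℓ = none := by
  constructor
  · by_contra hA
    have := msplit_some_left h (ℓ := ℓ) (Option.ne_none_iff_isSome.mp hA)
    rw [hM] at this; simp at this
  · by_contra hB
    have := msplit_some_right h (ℓ := ℓ) (Option.ne_none_iff_isSome.mp hB)
    rw [hM] at this; simp at this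

lemma WfConfig.mono {Var : Type} {N : ℕ} {sz : Var → ℕ} {s : Var → List Byte}
    {B : Finset (ℕ × ℕ)} {M M' : Mem} (h : WfConfig N sz s B M)
    (hsub : ∀ ℓ, (M' ℓ).isSome → (M ℓ).isSome) : WfConfig N sz s B M' :=
  ⟨h.1, h.2.1, h.2.2.1, fun ℓ hs => h.2.2.2 ℓ (hsub ℓ hs)⟩

lemma readBytes_length (M : Mem) (a n : ℕ) : (readBytes M a n).length = n := by
  simp [readBytes]

lemma readBytes_add (M : Mem) (a n m : ℕ) :
    readBytes M a (n + m) = readBytes M a n ++ readBytes M (a + n) m := by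
  simp only [readBytes, List.range_add, List.map_append, List.map_map]
  congr 1
  apply List.map_congr_left
  intro i _
  simp [Function.comp, Nat.add_assoc]

lemma readBytes_congr {M M' : Mem} {a n : ℕ} (h : ∀ i < n, M (a + i) = M' (a + i)) :
    readBytes M a n = readBytes M' a n := by
  simp only [readBytes]
  apply List.map_congr_left
  intro i hi
  rw [h i (List.mem_range.mp hi)]

lemma bytesToNum_append (xs ys : List Byte) :
    bytesToNum (xs ++ ys) = bytesToNum xs + 256 ^ xs.length * bytesToNum ys := by
  induction xs with
  | nil => simp [bytesToNum]
  | cons b xs ih => simp [bytesToNum, ih, pow_succ]; ring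

lemma mod_pow_split (v b k m : ℕ) :
    v % b ^ (k + m) = v % b ^ k + b ^ k * (v / b ^ k % b ^ m) := by
  rw [pow_add, Nat.mod_mul]

end Helpers

/-- Soundness of the `split-pt-pt-right` abduction rule: with
`0 < k`, `k + l < l'`, `size(ζ) = l`, `size(ζ') = l'`, and
`φ ⊨ 𝔟(ε) = 𝔟(ε') * ε = ε' + k * true`, if
`φ * (ζ = ζ'[k..k+l]) * M ⊨ ψ * (ε' ↦ ζ'[0..k]) * ((ε + l) ↦ ζ'[k+l..l'])`, then
`φ * (ε ↦ ζ) * (ζ = ζ'[k..k+l]) * M ⊨ ψ * (ε' ↦ ζ')`. -/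
theorem split_pt_pt_right_sound {Var : Type} [DecidableEq Var]
    (N : ℕ) (hN : 1 ≤ N) (sz : Var → ℕ) (hszpos : ∀ v, 1 ≤ sz v)
    (φ Mf ψ : SLF Var) (ε ε' ζ ζ' : Expr Var)
    (k l l' : ℕ) (hk : 0 < k) (hkl : k + l < l')
    (hζ : ζ.size sz N = l) (hζ' : ζ'.size sz N = l')
    (hent : Entails N sz φ
      (((SLF.cmp .eq (.base ε) (.base ε')).star
        (SLF.cmp .eq ε (.add ε' (.const N k)))).star .tt))
    (h : Entails N sz ((φ.star (.cmp .eq ζ (.substr ζ' k (k + l)))).star Mf)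
      ((ψ.star (.pts ε' (.substr ζ' 0 k))).star
        (.pts (.add ε (.const N l)) (.substr ζ' (k + l) l')))) :
    Entails N sz (((φ.star (.pts ε ζ)).star (.cmp .eq ζ (.substr ζ' k (k + l)))).star Mf)
      (ψ.star (.pts ε' ζ')) := by
  intro s B M hwf hsat
  simp only [sat] at hsat
  obtain ⟨MA, Mf2, hsp1, ⟨MB, Mpure, hsp2, ⟨Mphi, Mp, hsp3, hsatphi, hsatp⟩, hsatpure⟩,
    hsatMf⟩ := hsat
  -- abbreviations
  have hpure0 : ∀ ℓ, Mpure ℓ = none := hsatpure.1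
  have hζval : ζ.eval B s = (ζ'.eval B s / 256 ^ k) % 256 ^ l := by
    have := hsatpure.2
    simpa [CmpOp.sem, Expr.eval, Nat.add_sub_cancel_left] using this
  -- domain and value of Mp
  have hdomp : ∀ ℓ, (Mp ℓ).isSome ↔ (ε.eval B s ≤ ℓ ∧ ℓ < ε.eval B s + l) := by
    intro ℓ; have := hsatp.1 ℓ; rwa [hζ] at this
  have hvalp : bytesToNum (readBytes Mp (ε.eval B s) l)
      = (ζ'.eval B s / 256 ^ k) % 256 ^ l := by
    have := hsatp.2
    rw [hζ, hζval] at this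
    rwa [Nat.mod_mod_of_dvd _ dvd_rfl] at this
  -- Mp is a sub-memory of MB, MA, M
  have hp_MB : ∀ ℓ, (Mp ℓ).isSome → (MB ℓ).isSome := fun ℓ hh => msplit_some_right hsp3 hh
  have hphi_M : ∀ ℓ, (Mphi ℓ).isSome → (M ℓ).isSome := fun ℓ hh =>
    msplit_some_left hsp1 (msplit_some_left hsp2 (msplit_some_left hsp3 hh))
  -- apply `hent` to the φ-part
  have hwfphi : WfConfig N sz s B Mphi := hwf.mono hphi_M
  have heq : ε.eval B s = ε'.eval B s + k := by
    obtain ⟨X, Y, _, ⟨X1, X2, _, _, hc2⟩, _⟩ := hent s B Mphi hwfphi hsatphi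
    simpa [CmpOp.sem, Expr.eval] using hc2.2
  -- the memory M' = Mphi ⊎ Mf2
  set M' : Mem := fun ℓ => if (Mphi ℓ).isSome then Mphi ℓ else Mf2 ℓ with hM'def
  have hdphi : ∀ ℓ, ¬((Mphi ℓ).isSome ∧ (Mf2 ℓ).isSome) := fun ℓ hh =>
    hsp1.1 ℓ ⟨msplit_some_left hsp2 (msplit_some_left hsp3 hh.1), hh.2⟩
  have hspM' : msplit M' Mphi Mf2 := ⟨hdphi, fun ℓ => rfl⟩
  have hwfM' : WfConfig N sz s B M' := by
    apply hwf.mono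
    intro ℓ hh
    simp only [hM'def] at hh
    by_cases hφ : (Mphi ℓ).isSome
    · exact hphi_M ℓ hφ
    · rw [if_neg hφ] at hh
      exact msplit_some_right hsp1 hh
  have hsatM' : sat N sz s B M' ((φ.star (.cmp .eq ζ (.substr ζ' k (k + l)))).star Mf) := by
    refine ⟨Mphi, Mf2, hspM', ⟨Mphi, Mpure, ⟨?_, ?_⟩, hsatphi, hsatpure⟩, hsatMf⟩
    · intro ℓ hh; rw [hpure0 ℓ] at hh; simp at hh
    · intro ℓ
      by_cases hφ : (Mphi ℓ).isSome
      · rw [if_pos hφ]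
      · rw [if_neg hφ, hpure0 ℓ, Option.not_isSome_iff_eq_none.mp hφ]
  obtain ⟨MD, Mb, hsp4, ⟨Mpsi, Ma, hsp5, hsatpsi, hsata⟩, hsatb⟩ := h s B M' hwfM' hsatM'
  -- domain and value facts for Ma and Mb
  have hdoma : ∀ ℓ, (Ma ℓ).isSome ↔ (ε'.eval B s ≤ ℓ ∧ ℓ < ε'.eval B s + k) := by
    intro ℓ; have := hsata.1 ℓ; simpa [Expr.size] using this
  have hvala : bytesToNum (readBytes Ma (ε'.eval B s) k) = ζ'.eval B s % 256 ^ k := by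
    have := hsata.2
    simp only [Expr.size, Expr.eval, Nat.sub_zero, pow_zero, Nat.div_one] at this
    rwa [Nat.mod_mod_of_dvd _ dvd_rfl] at this
  have hdomb : ∀ ℓ, (Mb ℓ).isSome ↔
      (ε.eval B s + l ≤ ℓ ∧ ℓ < ε.eval B s + l + (l' - (k + l))) := by
    intro ℓ; have := hsatb.1 ℓ; simpa [Expr.size, Expr.eval] using this
  have hvalb : bytesToNum (readBytes Mb (ε.eval B s + l) (l' - (k + l)))
      = (ζ'.eval B s / 256 ^ (k + l)) % 256 ^ (l' - (k + l)) := by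
    have := hsatb.2
    simp only [Expr.size, Expr.eval] at this
    rwa [Nat.mod_mod_of_dvd _ dvd_rfl] at this
  -- pointwise description of M and M'
  have hM : ∀ ℓ, M ℓ = if (Mp ℓ).isSome then Mp ℓ else M' ℓ := by
    intro ℓ
    by_cases hp : (Mp ℓ).isSome
    · have hphi : Mphi ℓ = none :=
        Option.not_isSome_iff_eq_none.mp (fun hh => hsp3.1 ℓ ⟨hh, hp⟩)
      rw [if_pos hp, msplit_eq_left hsp1 (msplit_some_left hsp2 (hp_MB ℓ hp)),
        msplit_eq_left hsp2 (hp_MB ℓ hp), msplit_eq_right hsp3 hphi]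
    · rw [if_neg hp]
      have hpn : Mp ℓ = none := Option.not_isSome_iff_eq_none.mp hp
      have hMB : MB ℓ = Mphi ℓ := by
        by_cases hφ : (Mphi ℓ).isSome
        · exact msplit_eq_left hsp3 hφ
        · rw [msplit_eq_right hsp3 (Option.not_isSome_iff_eq_none.mp hφ), hpn,
            Option.not_isSome_iff_eq_none.mp hφ]
      have hMA : MA ℓ = Mphi ℓ := by
        by_cases hb : (MB ℓ).isSome
        · rw [msplit_eq_left hsp2 hb, hMB]
        · have hbn : MB ℓ = none := Option.not_isSome_iff_eq_none.mp hb
          rw [msplit_eq_right hsp2 hbn, hpure0 ℓ, ← hMB, hbn]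
      simp only [hM'def]
      by_cases hφ : (Mphi ℓ).isSome
      · rw [msplit_eq_left hsp1 (hMA ▸ hφ : (MA ℓ).isSome), hMA, if_pos hφ]
      · rw [msplit_eq_right hsp1 (hMA.trans (Option.not_isSome_iff_eq_none.mp hφ)), if_neg hφ]
  have hM'eq : ∀ ℓ, M' ℓ = if (Mpsi ℓ).isSome then Mpsi ℓ
      else if (Ma ℓ).isSome then Ma ℓ else Mb ℓ := by
    intro ℓ
    by_cases hψ : (Mpsi ℓ).isSome
    · rw [if_pos hψ, msplit_eq_left hsp4 (msplit_some_left hsp5 hψ), msplit_eq_left hsp5 hψ]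
    · rw [if_neg hψ]
      have hMD : MD ℓ = Ma ℓ := msplit_eq_right hsp5 (Option.not_isSome_iff_eq_none.mp hψ)
      by_cases ha : (Ma ℓ).isSome
      · rw [if_pos ha, msplit_eq_left hsp4 (hMD ▸ ha : (MD ℓ).isSome), hMD]
      · rw [if_neg ha, msplit_eq_right hsp4 (hMD.trans (Option.not_isSome_iff_eq_none.mp ha))]
  have hMpM' : ∀ ℓ, (Mp ℓ).isSome → M' ℓ = none := by
    intro ℓ hp
    have h1 : Mphi ℓ = none :=
      Option.not_isSome_iff_eq_none.mp (fun hh => hsp3.1 ℓ ⟨hh, hp⟩)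
    have h2 : Mf2 ℓ = none := Option.not_isSome_iff_eq_none.mp
      (fun hh => hsp1.1 ℓ ⟨msplit_some_left hsp2 (hp_MB ℓ hp), hh⟩)
    simp only [hM'def]; simp [h1, h2]
  have hnone_of : ∀ ℓ, M' ℓ = none → Mpsi ℓ = none ∧ Ma ℓ = none ∧ Mb ℓ = none := by
    intro ℓ h0
    have h4 := msplit_none hsp4 h0
    have h5 := msplit_none hsp5 h4.1
    exact ⟨h5.1, h5.2, h4.2⟩
  have hψ_pn : ∀ ℓ, (Mpsi ℓ).isSome → Mp ℓ = none := by
    intro ℓ hψ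
    by_contra hp
    have hp' := Option.ne_none_iff_isSome.mp hp
    exact absurd ((hnone_of ℓ (hMpM' ℓ hp')).1 ▸ hψ) (by simp)
  -- the big memory
  set Mbig : Mem := fun ℓ => if (Ma ℓ).isSome then Ma ℓ else if (Mp ℓ).isSome then Mp ℓ else Mb ℓ
    with hMbigdef
  refine ⟨Mpsi, Mbig, ⟨?_, ?_⟩, hsatpsi, ?_, ?_⟩
  · -- disjointness of Mpsi and Mbig
    rintro ℓ ⟨hψ, hbig⟩
    have hpn : Mp ℓ = none := hψ_pn ℓ hψ
    have han : Ma ℓ = none :=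
      Option.not_isSome_iff_eq_none.mp (fun hh => hsp5.1 ℓ ⟨hψ, hh⟩)
    have hbn : Mb ℓ = none := Option.not_isSome_iff_eq_none.mp
      (fun hh => hsp4.1 ℓ ⟨msplit_some_left hsp5 hψ, hh⟩)
    simp only [hMbigdef] at hbig
    simp [han, hpn, hbn] at hbig
  · -- the splitting of M
    intro ℓ
    by_cases hψ : (Mpsi ℓ).isSome
    · rw [if_pos hψ, hM ℓ, if_neg (by simp [hψ_pn ℓ hψ]), hM'eq ℓ, if_pos hψ]
    · rw [if_neg hψ, hMbigdef]
      by_cases hp : (Mp ℓ).isSome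
      · have h3 := hnone_of ℓ (hMpM' ℓ hp)
        rw [hM ℓ, if_pos hp]
        simp [h3.2.1, hp]
      · rw [hM ℓ, if_neg hp, hM'eq ℓ, if_neg hψ]
        by_cases ha : (Ma ℓ).isSome <;> simp [ha, hp]
  · -- domain of Mbig
    intro ℓ
    rw [hζ']; simp only [hMbigdef]
    have hiff : ((if (Ma ℓ).isSome then Ma ℓ else if (Mp ℓ).isSome then Mp ℓ else Mb ℓ).isSome
        ↔ ((Ma ℓ).isSome ∨ (Mp ℓ).isSome ∨ (Mb ℓ).isSome)) := by
      by_cases h1 : (Ma ℓ).isSome <;> by_cases h2 : (Mp ℓ).isSome <;> simp [h1, h2]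
    rw [hiff, hdoma, hdomp, hdomb, heq]
    omega
  · -- value of Mbig
    rw [hζ']
    have hl' : l' = k + (l + (l' - (k + l))) := by omega
    rw [hl', readBytes_add, readBytes_add, bytesToNum_append, bytesToNum_append,
      readBytes_length, readBytes_length]
    have hra : readBytes Mbig (ε'.eval B s) k = readBytes Ma (ε'.eval B s) k := by
      apply readBytes_congr
      intro i hi
      have ham : (Ma (ε'.eval B s + i)).isSome := (hdoma _).mpr ⟨by omega, by omega⟩
      rw [hMbigdef]; simp [ham]
    have hrp : readBytes Mbig (ε'.eval B s + k) l = readBytes Mp (ε'.eval B s + k) l := by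
      apply readBytes_congr
      intro i hi
      have hpm : (Mp (ε'.eval B s + k + i)).isSome := (hdomp _).mpr ⟨by omega, by omega⟩
      have ham : ¬(Ma (ε'.eval B s + k + i)).isSome := by rw [hdoma]; omega
      rw [hMbigdef]; simp [ham, hpm]
    have hrb : readBytes Mbig (ε'.eval B s + k + l) (l' - (k + l))
        = readBytes Mb (ε'.eval B s + k + l) (l' - (k + l)) := by
      apply readBytes_congr
      intro i hi
      have ham : ¬(Ma (ε'.eval B s + k + l + i)).isSome := by rw [hdoma]; omega
      have hpm : ¬(Mp (ε'.eval B s + k + l + i)).isSome := by rw [hdomp]; omega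
      rw [hMbigdef]; simp [ham, hpm]
    rw [hra, hrp, hrb, hvala]
    rw [heq] at hvalp hvalb
    rw [hvalp, hvalb]
    rw [mod_pow_split (ζ'.eval B s) 256 k (l + (l' - (k + l))),
      mod_pow_split _ 256 l (l' - (k + l)), Nat.div_div_eq_div_mul, ← pow_add]

end Broom
end

section
/- Soundness of the split-pt-bl-right abduction rule: let ζ be an expression with size(ζ) = l, let m be either ⊤ or a byte; if m = ⊤ let χ = emp, and if m is a byte let χ be the pure atom ζ = m^l (the sequence of l copies of m). Let κ be an expression, suppose φ ⊨ 𝔟(ε) = 𝔟(ε') * ε' ≤ ε * ε + l ≤ ε' + κ * true, and let z be a variable of size N occurring in none of φ, M, ψ, χ, ε, ε', ζ, κ. If φ * χ * M ⊨ ∃z. ψ * (ε' ↦ m[ε − ε']) * ((ε + l) ↦ m[z]) * (z = κ − (ε − ε') − l), then φ * (ε ↦ ζ) * χ * M ⊨ ψ * (ε' ↦ m[κ]). -/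
namespace Broom

section Helpers

lemma msplit_eq₁ {M M₁ M₂ : Mem} (h : msplit M M₁ M₂) {ℓ : ℕ} {b : Byte}
    (h1 : M₁ ℓ = some b) : M ℓ = some b := by
  rw [h.2 ℓ, h1]; simp

lemma msplit_eq₂ {M M₁ M₂ : Mem} (h : msplit M M₁ M₂) {ℓ : ℕ} {b : Byte}
    (h2 : M₂ ℓ = some b) : M ℓ = some b := by
  have h1 : ¬(M₁ ℓ).isSome := fun hs => h.1 ℓ ⟨hs, by simp [h2]⟩
  rw [h.2 ℓ, if_neg h1, h2]

lemma bytesToNum_lt : ∀ L : List Byte, bytesToNum L < 256 ^ L.length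
  | [] => by simp [bytesToNum]
  | b :: L => by
    have hb := b.isLt
    have hL := bytesToNum_lt L
    simp only [bytesToNum, List.length_cons, pow_succ]
    omega

lemma bytesToNum_inj : ∀ L₁ L₂ : List Byte, L₁.length = L₂.length →
    bytesToNum L₁ = bytesToNum L₂ → L₁ = L₂
  | [], [], _, _ => rfl
  | a :: L₁, b :: L₂, hl, he => by
    simp only [bytesToNum] at he
    simp only [List.length_cons, Nat.add_right_cancel_iff] at hl
    have ha := a.isLt; have hb := b.isLt
    have h1 : a.val = b.val ∧ bytesToNum L₁ = bytesToNum L₂ := by omega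
    have : a = b := Fin.ext h1.1
    rw [this, bytesToNum_inj L₁ L₂ hl h1.2]

lemma eval_update {Var : Type} [DecidableEq Var] (B : Finset (ℕ × ℕ))
    (s : Var → List Byte) (z : Var) (v : List Byte)
    (e : Expr Var) (hz : z ∉ e.fv) :
    e.eval B (Function.update s z v) = e.eval B s := by
  induction e with
  | const n w => rfl
  | var x =>
      simp only [Expr.fv, Set.mem_singleton_iff] at hz
      simp [Expr.eval, Function.update_of_ne (Ne.symm hz)]
  | base e ih => simp only [Expr.fv] at hz; simp [Expr.eval, ih hz]
  | ende e ih => simp only [Expr.fv] at hz; simp [Expr.eval, ih hz]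
  | add e₁ e₂ ih₁ ih₂ =>
      simp only [Expr.fv, Set.mem_union, not_or] at hz
      simp [Expr.eval, ih₁ hz.1, ih₂ hz.2]
  | sub e₁ e₂ ih₁ ih₂ =>
      simp only [Expr.fv, Set.mem_union, not_or] at hz
      simp [Expr.eval, ih₁ hz.1, ih₂ hz.2]
  | substr e i j ih => simp only [Expr.fv] at hz; simp [Expr.eval, ih hz]

lemma sat_update {Var : Type} [DecidableEq Var] (N : ℕ) (sz : Var → ℕ)
    (z : Var) (v : List Byte) (B : Finset (ℕ × ℕ)) :
    ∀ (φ : SLF Var) (s : Var → List Byte) (M : Mem), z ∉ φ.fv →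
    (sat N sz (Function.update s z v) B M φ ↔ sat N sz s B M φ) := by
  intro φ
  induction φ with
  | emp => intro s M _; simp [sat]
  | tt => intro s M _; simp [sat]
  | pts e₁ e₂ =>
      intro s M hz
      simp only [SLF.fv, Set.mem_union, not_or] at hz
      simp [sat, eval_update B s z v _ hz.1, eval_update B s z v _ hz.2]
  | ptsBlk e₁ m e₂ =>
      intro s M hz
      simp only [SLF.fv, Set.mem_union, not_or] at hz
      simp [sat, eval_update B s z v _ hz.1, eval_update B s z v _ hz.2]
  | cmp op e₁ e₂ =>
      intro s M hz
      simp only [SLF.fv, Set.mem_union, not_or] at hz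
      simp [sat, eval_update B s z v _ hz.1, eval_update B s z v _ hz.2]
  | star φ₁ φ₂ ih₁ ih₂ =>
      intro s M hz
      simp only [SLF.fv, Set.mem_union, not_or] at hz
      simp only [sat]
      constructor
      · rintro ⟨M₁, M₂, hsp, h1, h2⟩
        exact ⟨M₁, M₂, hsp, (ih₁ s M₁ hz.1).1 h1, (ih₂ s M₂ hz.2).1 h2⟩
      · rintro ⟨M₁, M₂, hsp, h1, h2⟩
        exact ⟨M₁, M₂, hsp, (ih₁ s M₁ hz.1).2 h1, (ih₂ s M₂ hz.2).2 h2⟩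
  | disj φ₁ φ₂ ih₁ ih₂ =>
      intro s M hz
      simp only [SLF.fv, Set.mem_union, not_or] at hz
      simp only [sat]
      rw [ih₁ s M hz.1, ih₂ s M hz.2]
  | exis x φ ih =>
      intro s M hz
      simp only [SLF.fv, Set.mem_diff, Set.mem_singleton_iff, not_and, not_not] at hz
      by_cases hxz : x = z
      · subst hxz
        simp only [sat]
        constructor
        · rintro ⟨w, hw, hs⟩
          exact ⟨w, hw, by rwa [Function.update_idem] at hs⟩
        · rintro ⟨w, hw, hs⟩
          exact ⟨w, hw, by rwa [Function.update_idem]⟩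
      · have hzφ : z ∉ φ.fv := fun hmem => hxz (hz hmem).symm
        simp only [sat]
        constructor
        · rintro ⟨w, hw, hs⟩
          rw [Function.update_comm (fun hh => hxz hh.symm)] at hs
          exact ⟨w, hw, (ih (Function.update s x w) M hzφ).1 hs⟩
        · rintro ⟨w, hw, hs⟩
          refine ⟨w, hw, ?_⟩
          rw [Function.update_comm (fun hh => hxz hh.symm)]
          exact (ih (Function.update s x w) M hzφ).2 hs

lemma wf_sub {Var : Type} {N : ℕ} {sz : Var → ℕ} {s : Var → List Byte}
    {B : Finset (ℕ × ℕ)} {M M' : Mem}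
    (hwf : WfConfig N sz s B M) (hsub : ∀ ℓ, (M' ℓ).isSome → (M ℓ).isSome) :
    WfConfig N sz s B M' :=
  ⟨hwf.1, hwf.2.1, hwf.2.2.1, fun ℓ hh => hwf.2.2.2 ℓ (hsub ℓ hh)⟩

lemma readBytes_getElem (M : Mem) (a n i : ℕ) (hi : i < n) :
    (readBytes M a n)[i]'(by simp [readBytes_length]; exact hi) = (M (a + i)).getD 0 := by
  simp [readBytes]

end Helpers

set_option maxHeartbeats 1000000 in
/-- Soundness of the `split-pt-bl-right` abduction rule. Here `m` is
either ⊤ (`none`) with `χ = emp`, or a byte `b` (`some b`) with `χ ≡ ζ = b^l`; and `z`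
is a fresh variable of size `N`. -/
theorem split_pt_bl_right_sound {Var : Type} [DecidableEq Var]
    (N : ℕ) (hN : 1 ≤ N) (sz : Var → ℕ) (hszpos : ∀ v, 1 ≤ sz v)
    (φ Mf ψ : SLF Var) (ε ε' ζ κ : Expr Var)
    (l : ℕ) (hζ : ζ.size sz N = l)
    (m : Option Byte) (χ : SLF Var)
    (hχ : (m = none ∧ χ = .emp) ∨
      (∃ b : Byte, m = some b ∧
        χ = SLF.cmp .eq ζ (.const l (bytesToNum (List.replicate l b)))))
    (hent : Entails N sz φ
      ((((SLF.cmp .eq (.base ε) (.base ε')).star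
          (SLF.cmp .le ε' ε)).star
        (SLF.cmp .le (.add ε (.const N l)) (.add ε' κ))).star .tt))
    (z : Var) (hszz : sz z = N)
    (hzfresh : z ∉ φ.fv ∪ Mf.fv ∪ ψ.fv ∪ χ.fv ∪ ε.fv ∪ ε'.fv ∪ ζ.fv ∪ κ.fv)
    (h : Entails N sz ((φ.star χ).star Mf)
      (.exis z (((ψ.star (.ptsBlk ε' m (.sub ε ε'))).star
          (.ptsBlk (.add ε (.const N l)) m (.var z))).star
        (SLF.cmp .eq (.var z) (.sub (.sub κ (.sub ε ε')) (.const N l)))))) :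
    Entails N sz (((φ.star (.pts ε ζ)).star χ).star Mf)
      (ψ.star (.ptsBlk ε' m κ)) := by
  intro s B M hwf hsat
  -- freshness facts
  simp only [Set.mem_union, not_or] at hzfresh
  obtain ⟨⟨⟨⟨⟨⟨⟨hzφ, hzMf⟩, hzψ⟩, hzχ⟩, hzε⟩, hzε'⟩, hzζ⟩, hzκ⟩ := hzfresh
  -- decompose the hypothesis memory
  obtain ⟨A, MMf, hsp1, hA, hMfs⟩ := hsat
  obtain ⟨A₁, Mχ, hsp2, hA₁, hχs⟩ := hA
  obtain ⟨Mφ, Mpt, hsp3, hφs, hpts⟩ := hA₁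
  have hχemp : ∀ ℓ, Mχ ℓ = none := by
    rcases hχ with ⟨_, rfl⟩ | ⟨b, _, rfl⟩
    · exact hχs
    · exact hχs.1
  -- chains: each piece sits inside M
  have hφM : ∀ {ℓ b}, Mφ ℓ = some b → M ℓ = some b :=
    fun hb => msplit_eq₁ hsp1 (msplit_eq₁ hsp2 (msplit_eq₁ hsp3 hb))
  have hptM : ∀ {ℓ b}, Mpt ℓ = some b → M ℓ = some b :=
    fun hb => msplit_eq₁ hsp1 (msplit_eq₁ hsp2 (msplit_eq₂ hsp3 hb))
  have hφMs : ∀ ℓ, (Mφ ℓ).isSome → (M ℓ).isSome := by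
    intro ℓ hh
    obtain ⟨b, hb⟩ := Option.isSome_iff_exists.1 hh
    simp [hφM hb]
  have hptMs : ∀ ℓ, (Mpt ℓ).isSome → (M ℓ).isSome := by
    intro ℓ hh
    obtain ⟨b, hb⟩ := Option.isSome_iff_exists.1 hh
    simp [hptM hb]
  -- pure facts from hent
  have hpure := hent s B Mφ (wf_sub hwf hφMs) hφs
  obtain ⟨P1, _, _, hP1, _⟩ := hpure
  obtain ⟨Q1, Q2, _, _, hle2⟩ := hP1
  set a := ε.eval B s with ha_def
  set a' := ε'.eval B s with ha'_def
  set k := κ.eval B s with hk_def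
  have ha'a : a' ≤ a := by
    obtain ⟨_, R2, _, _, hle1⟩ := ‹sat N sz s B Q1
      ((SLF.cmp .eq (.base ε) (.base ε')).star (SLF.cmp .le ε' ε))›
    exact hle1.2
  have hak : a + l ≤ a' + k := by
    have := hle2.2
    simpa [Expr.eval, CmpOp.sem] using this
  -- build the smaller memory M'
  set M' : Mem := fun ℓ => if (Mpt ℓ).isSome then none else M ℓ with hM'def
  have hM'M : ∀ {ℓ b}, M' ℓ = some b → M ℓ = some b := by
    intro ℓ b hb
    by_cases hp : (Mpt ℓ).isSome
    · simp [hM'def, hp] at hb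
    · simpa [hM'def, hp] using hb
  have hM'Ms : ∀ ℓ, (M' ℓ).isSome → (M ℓ).isSome := by
    intro ℓ hh
    obtain ⟨b, hb⟩ := Option.isSome_iff_exists.1 hh
    simp [hM'M hb]
  have hA₁some : ∀ ℓ, (A₁ ℓ).isSome ↔ (Mφ ℓ).isSome ∨ (Mpt ℓ).isSome := msplit_isSome hsp3
  have hAsome : ∀ ℓ, (A ℓ).isSome ↔ (Mφ ℓ).isSome ∨ (Mpt ℓ).isSome := by
    intro ℓ
    rw [msplit_isSome hsp2, hA₁some, hχemp]
    simp
  have hMeq : ∀ ℓ, M ℓ = if (Mφ ℓ).isSome then Mφ ℓ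
      else if (Mpt ℓ).isSome then Mpt ℓ else MMf ℓ := by
    intro ℓ
    rw [hsp1.2 ℓ, hsp2.2 ℓ, hsp3.2 ℓ, hχemp ℓ]
    by_cases h1 : (Mφ ℓ).isSome <;> by_cases h2 : (Mpt ℓ).isSome <;> simp [h1, h2]
  have hM'sat : sat N sz s B M' ((φ.star χ).star Mf) := by
    refine ⟨Mφ, MMf, ⟨?_, ?_⟩, ⟨Mφ, Mχ, ⟨?_, ?_⟩, hφs, hχs⟩, hMfs⟩
    · intro ℓ ⟨h1, h2⟩
      exact hsp1.1 ℓ ⟨(hAsome ℓ).2 (Or.inl h1), h2⟩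
    · intro ℓ
      by_cases h1 : (Mφ ℓ).isSome <;> by_cases h2 : (Mpt ℓ).isSome
      · exact absurd ⟨h1, h2⟩ (hsp3.1 ℓ)
      · simp [hM'def, h1, h2, hMeq ℓ]
      · have hf : ¬ (MMf ℓ).isSome := fun hh => hsp1.1 ℓ ⟨(hAsome ℓ).2 (Or.inr h2), hh⟩
        simp [hM'def, h1, h2, Option.not_isSome_iff_eq_none.mp hf]
      · simp [hM'def, h1, h2, hMeq ℓ]
    · intro ℓ ⟨_, h2⟩
      simp [hχemp ℓ] at h2
    · intro ℓ
      by_cases h1 : (Mφ ℓ).isSome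
      · simp [h1]
      · simp [h1, Option.not_isSome_iff_eq_none.mp h1, hχemp ℓ]
  -- apply the abduction hypothesis
  obtain ⟨v, hvlen, hsatz⟩ := h s B M' (wf_sub hwf hM'Ms) hM'sat
  set s' := Function.update s z v with hs'def
  obtain ⟨C, Mc, hspc, hC, hcmp⟩ := hsatz
  obtain ⟨D, MR, hspd, hD, hR⟩ := hC
  obtain ⟨Mψ, ML, hspe, hψ', hL⟩ := hD
  -- transfer evaluations back to s
  have hevε : ε.eval B s' = a := eval_update B s z v ε hzε
  have hevε' : ε'.eval B s' = a' := eval_update B s z v ε' hzε'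
  have hevκ : κ.eval B s' = k := eval_update B s z v κ hzκ
  have hsz' : s' z = v := Function.update_self z v s
  have hψs : sat N sz s B Mψ ψ := (sat_update N sz z v B ψ s Mψ hzψ).1 hψ'
  have hMcE : ∀ ℓ, Mc ℓ = none := hcmp.1
  have hvzeq : bytesToNum v = k - (a - a') - l := by
    have h2 := hcmp.2
    simpa [CmpOp.sem, Expr.eval, hsz', hevκ, hevε, hevε'] using h2
  -- M' = C pointwise
  have hM'C : ∀ ℓ, M' ℓ = C ℓ := by
    intro ℓ
    rw [hspc.2 ℓ]
    by_cases h1 : (C ℓ).isSome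
    · simp [h1]
    · simp [h1, Option.not_isSome_iff_eq_none.mp h1, hMcE]
  -- domain characterizations
  have hMLdom : ∀ ℓ, (ML ℓ).isSome ↔ (a' ≤ ℓ ∧ ℓ < a) := by
    intro ℓ
    have := hL.1 ℓ
    rw [this]
    simp only [Expr.eval, hevε, hevε']
    omega
  have hMRdom : ∀ ℓ, (MR ℓ).isSome ↔ (a + l ≤ ℓ ∧ ℓ < a + l + bytesToNum v) := by
    intro ℓ
    have := hR.1 ℓ
    rw [this]
    simp [Expr.eval, hevε, hsz']
  have hMptdom : ∀ ℓ, (Mpt ℓ).isSome ↔ (a ≤ ℓ ∧ ℓ < a + l) := by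
    intro ℓ
    have := hpts.1 ℓ
    rw [this, hζ]
  have hsum : a + l + bytesToNum v = a' + k := by omega
  -- value chains for the three middle pieces
  have hML_M : ∀ {ℓ b}, ML ℓ = some b → M ℓ = some b := by
    intro ℓ b hb
    have hc : C ℓ = some b := msplit_eq₁ hspd (msplit_eq₂ hspe hb)
    exact hM'M (by rw [hM'C ℓ]; exact hc)
  have hMR_M : ∀ {ℓ b}, MR ℓ = some b → M ℓ = some b := by
    intro ℓ b hb
    have hc : C ℓ = some b := msplit_eq₂ hspd hb
    exact hM'M (by rw [hM'C ℓ]; exact hc)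
  -- Mψ is disjoint from the three middle pieces
  have hψdisj : ∀ ℓ, (Mψ ℓ).isSome →
      ¬(ML ℓ).isSome ∧ ¬(MR ℓ).isSome ∧ ¬(Mpt ℓ).isSome := by
    intro ℓ hh
    refine ⟨fun h' => hspe.1 ℓ ⟨hh, h'⟩,
      fun h' => hspd.1 ℓ ⟨(msplit_isSome hspe ℓ).2 (Or.inl hh), h'⟩, ?_⟩
    intro h'
    have hC : (C ℓ).isSome :=
      (msplit_isSome hspd ℓ).2 (Or.inl ((msplit_isSome hspe ℓ).2 (Or.inl hh)))
    have hM' : (M' ℓ).isSome := by rw [hM'C ℓ]; exact hC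
    rw [hM'def] at hM'
    simp only [h', if_true] at hM'
    simp at hM'
  have hψ_M : ∀ {ℓ b}, Mψ ℓ = some b → M ℓ = some b := by
    intro ℓ b hb
    have hc : C ℓ = some b := msplit_eq₁ hspd (msplit_eq₁ hspe hb)
    exact hM'M (by rw [hM'C ℓ]; exact hc)
  have hMsome : ∀ ℓ, (M ℓ).isSome ↔
      (Mψ ℓ).isSome ∨ (ML ℓ).isSome ∨ (Mpt ℓ).isSome ∨ (MR ℓ).isSome := by
    intro ℓ
    constructor
    · intro hh
      by_cases hp : (Mpt ℓ).isSome
      · exact Or.inr (Or.inr (Or.inl hp))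
      · have hM' : (M' ℓ).isSome := by rw [hM'def]; simpa [hp] using hh
        rw [hM'C ℓ, msplit_isSome hspd, msplit_isSome hspe] at hM'
        tauto
    · rintro (hh | hh | hh | hh) <;>
        obtain ⟨b, hb⟩ := Option.isSome_iff_exists.1 hh
      · simp [hψ_M hb]
      · simp [hML_M hb]
      · simp [hptM hb]
      · simp [hMR_M hb]
  -- the remaining block memory
  set MB : Mem := fun ℓ => if (Mψ ℓ).isSome then none else M ℓ with hMBdef
  refine ⟨Mψ, MB, ⟨?_, ?_⟩, hψs, ?_, ?_⟩
  · intro ℓ ⟨h1, h2⟩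
    rw [hMBdef] at h2
    simp [h1] at h2
  · intro ℓ
    by_cases h1 : (Mψ ℓ).isSome
    · obtain ⟨b, hb⟩ := Option.isSome_iff_exists.1 h1
      rw [hψ_M hb, if_pos h1, hb]
    · simp [hMBdef, h1]
  · -- domain of MB is exactly [a', a' + k)
    intro ℓ
    show (MB ℓ).isSome ↔ a' ≤ ℓ ∧ ℓ < a' + k
    constructor
    · intro hh
      have hMB : (MB ℓ).isSome := hh
      rw [hMBdef] at hMB
      by_cases h1 : (Mψ ℓ).isSome
      · simp [h1] at hMB
      · simp only [h1, if_false] at hMB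
        have := (hMsome ℓ).1 hMB
        rcases this with h' | h' | h' | h'
        · exact absurd h' h1
        · have := (hMLdom ℓ).1 h'; omega
        · have := (hMptdom ℓ).1 h'; omega
        · have := (hMRdom ℓ).1 h'; omega
    · intro ⟨hl1, hl2⟩
      have hone : (ML ℓ).isSome ∨ (Mpt ℓ).isSome ∨ (MR ℓ).isSome := by
        by_cases c1 : ℓ < a
        · exact Or.inl ((hMLdom ℓ).2 ⟨hl1, c1⟩)
        · by_cases c2 : ℓ < a + l
          · exact Or.inr (Or.inl ((hMptdom ℓ).2 ⟨by omega, c2⟩))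
          · exact Or.inr (Or.inr ((hMRdom ℓ).2 ⟨by omega, by omega⟩))
      have hMs : (M ℓ).isSome := (hMsome ℓ).2 (by tauto)
      have hψn : ¬(Mψ ℓ).isSome := by
        intro hh
        have := hψdisj ℓ hh
        tauto
      show (MB ℓ).isSome
      rw [hMBdef]
      simpa [hψn] using hMs
  · -- byte contents when m = some b
    intro b hmb ℓ hl1 hl2
    replace hl1 : a' ≤ ℓ := hl1
    replace hl2 : ℓ < a' + k := hl2
    -- in the some case, χ pins down the bytes of Mpt
    have hMpt_b : ∀ ℓ', a ≤ ℓ' → ℓ' < a + l → Mpt ℓ' = some b := by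
      rcases hχ with ⟨hm0, _⟩ | ⟨b', hmb', hχeq⟩
      · rw [hm0] at hmb; exact absurd hmb (by simp)
      · have hbb : b = b' := by
          rw [hmb'] at hmb
          exact (Option.some_injective _ hmb).symm
        subst hbb
        subst hχeq
        have hζval : ζ.eval B s = bytesToNum (List.replicate l b) := hχs.2
        have hmod : ζ.eval B s % 256 ^ l = bytesToNum (List.replicate l b) := by
          rw [hζval]
          exact Nat.mod_eq_of_lt (by
            have := bytesToNum_lt (List.replicate l b)
            simpa using this)
        have hread : readBytes Mpt a l = List.replicate l b := by
          apply bytesToNum_inj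
          · simp [readBytes_length]
          · rw [← hmod]
            have hp2 := hpts.2
            rw [hζ] at hp2
            exact hp2
        intro ℓ' h1 h2
        have hi : ℓ' - a < l := by omega
        have hsome : (Mpt ℓ').isSome := (hMptdom ℓ').2 ⟨h1, h2⟩
        obtain ⟨c, hc⟩ := Option.isSome_iff_exists.1 hsome
        have hg : (readBytes Mpt a l)[ℓ' - a]'(by rw [readBytes_length]; exact hi)
            = (Mpt (a + (ℓ' - a))).getD 0 := readBytes_getElem Mpt a l _ hi
        simp only [hread, List.getElem_replicate] at hg
        have hae : a + (ℓ' - a) = ℓ' := by omega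
        rw [hae, hc] at hg
        simp only [Option.getD_some] at hg
        rw [hc, hg]
    -- ML and MR have byte b on their domains
    have hML_b : ∀ ℓ', a' ≤ ℓ' → ℓ' < a → ML ℓ' = some b := by
      intro ℓ' h1 h2
      have := hL.2 b hmb ℓ'
      simp only [Expr.eval, hevε, hevε'] at this
      exact this h1 (by omega)
    have hMR_b : ∀ ℓ', a + l ≤ ℓ' → ℓ' < a + l + bytesToNum v → MR ℓ' = some b := by
      intro ℓ' h1 h2
      have := hR.2 b hmb ℓ'
      simp only [Expr.eval, hevε, hsz'] at this
      exact this h1 h2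
    have hMval : M ℓ = some b := by
      by_cases c1 : ℓ < a
      · exact hML_M (hML_b ℓ hl1 c1)
      · by_cases c2 : ℓ < a + l
        · exact hptM (hMpt_b ℓ (by omega) c2)
        · exact hMR_M (hMR_b ℓ (by omega) (by omega))
    have hψn : ¬(Mψ ℓ).isSome := by
      intro hh
      have hd := hψdisj ℓ hh
      by_cases c1 : ℓ < a
      · exact hd.1 ((hMLdom ℓ).2 ⟨hl1, c1⟩)
      · by_cases c2 : ℓ < a + l
        · exact hd.2.2 ((hMptdom ℓ).2 ⟨by omega, c2⟩)
        · exact hd.2.1 ((hMRdom ℓ).2 ⟨by omega, by omega⟩)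
    show MB ℓ = some b
    rw [hMBdef]
    simp [hψn, hMval]

end Broom
end
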